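/- arXiv:1601.00399 — 2 statements merged into one kernel-verified Lean document; each statement's English description precedes it below -/
import Mathlib

section
/- Explicit orthogonal decomposition of pairwise rank information: for distinct a, b ∈ [n], set x_{a≻b} := δ_{ab} − δ_{ba} ∈ L(Γ({a,b})) (so that x_{b≻a} = −x_{a≻b}), and let H² := {F : Γ² → ℝ with F(ab) + F(ba) = 0 for every pair {a,b} ⊆ [n]}, where Γ² is the set of all two-letter duplicate-free words on [n], equipped with the inner product ⟨F,G⟩ := Σ_{π∈Γ²} F(π)G(π). Define e_a := Σ_{b≠a} x_{a≻b} for a ∈ [n], f_{(a,b)} := Σ_{c∉{a,b}} (x_{a≻b} + x_{b≻c} + x_{c≻a}) for a ≠ b, and set H²₁ := span{e_a : a ∈ [n]}, H²₂ := span{f_{(a,b)} : a,b ∈ [n], a ≠ b}. Then H²₁ and H²₂ are orthogonal, H² = H²₁ ⊕ H²₂, dim H²₁ = n−1, dim H²₂ = (n−1)(n−2)/2, and moreover H²₁ = {Σ_{1≤i<j≤n} (s_i − s_j)·x_{i≻j} : s ∈ ℝⁿ} (the space of gradient edge flows). -/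
open Finset
open scoped List

abbrev Word (n : ℕ) := List (Fin n)

/-- `Γ(A)`: duplicate-free words whose set of letters is exactly `A`. -/
noncomputable def rankings (n : ℕ) (A : Finset (Fin n)) : Finset (Word n) :=
  A.toList.permutations.toFinset

/-- All duplicate-free words on `[n]`. -/
noncomputable def allWords (n : ℕ) : Finset (Word n) :=
  Finset.univ.biUnion fun A : Finset (Fin n) => rankings n A

def IsRanking {n : ℕ} (A : Finset (Fin n)) (w : Word n) : Prop :=
  w.Nodup ∧ w.toFinset = A

instance {n : ℕ} (A : Finset (Fin n)) (w : Word n) : Decidable (IsRanking A w) :=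
  inferInstanceAs (Decidable (w.Nodup ∧ w.toFinset = A))

/-- Membership in `L(Γ(A))`: functions supported on `Γ(A)`. -/
def MemL {n : ℕ} (A : Finset (Fin n)) (F : Word n → ℝ) : Prop :=
  ∀ w, F w ≠ 0 → IsRanking A w

/-- Marginal operator `M_B` (with the convention `M_∅ F = (Σ F)·δ_0̄`). -/
noncomputable def marg {n : ℕ} (B : Finset (Fin n)) (F : Word n → ℝ) : Word n → ℝ :=
  fun π => if IsRanking B π then ∑ σ ∈ allWords n, (if π <+ σ then F σ else 0) else 0

/-- Membership in the localization space `H_B` (for `B = ∅` this is `L(Γ(∅)) = ℝ·δ_0̄`). -/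
def MemH {n : ℕ} (B : Finset (Fin n)) (F : Word n → ℝ) : Prop :=
  MemL B F ∧
    (∀ B' : Finset (Fin n), B' ⊂ B → 2 ≤ B'.card → marg B' F = 0) ∧
    (2 ≤ B.card → ∑ π ∈ rankings n B, F π = 0)

/-- `P̄(A) = {B ⊆ A : |B| ≥ 2} ∪ {∅}`. -/
def Pbar {n : ℕ} (A : Finset (Fin n)) : Finset (Finset (Fin n)) :=
  A.powerset.filter fun B => 2 ≤ B.card ∨ B = ∅

/-- Synthesis operator `φ_A`. -/
noncomputable def synth {n : ℕ} (A : Finset (Fin n)) (F : Word n → ℝ) : Word n → ℝ :=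
  fun σ =>
    if IsRanking A σ then
      F [] / (Nat.factorial A.card : ℝ) +
        ∑ π ∈ allWords n,
          (if π ≠ [] ∧ π <:+: σ then F π / (Nat.factorial (A.card - π.length + 1) : ℝ) else 0)
    else 0

/-- Dirac function `δ_π`. -/
noncomputable def dirac {n : ℕ} (π : Word n) : Word n → ℝ :=
  fun w => if w = π then 1 else 0

/-- `σ|_C`: the induced word of `σ` on `C`. -/
def restrictWord {n : ℕ} (σ : Word n) (C : Finset (Fin n)) : Word n :=
  σ.filter fun a => decide (a ∈ C)

/-- `Γ²`: two-letter duplicate-free words on `[n]`. -/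
noncomputable def gamma2 (n : ℕ) : Finset (Word n) :=
  (allWords n).filter fun w => w.length = 2

/-- `x_{a≻b} = δ_{ab} − δ_{ba}`. -/
noncomputable def xab {n : ℕ} (a b : Fin n) : Word n → ℝ :=
  dirac [a, b] - dirac [b, a]

/-- `e_a = Σ_{b ≠ a} x_{a≻b}`. -/
noncomputable def evec {n : ℕ} (a : Fin n) : Word n → ℝ :=
  ∑ b ∈ Finset.univ.erase a, xab a b

/-- `f_{(a,b)} = Σ_{c ∉ {a,b}} (x_{a≻b} + x_{b≻c} + x_{c≻a})`. -/
noncomputable def fvec {n : ℕ} (a b : Fin n) : Word n → ℝ :=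
  ∑ c ∈ Finset.univ \ {a, b}, (xab a b + xab b c + xab c a)

/-- `H²`: functions on `Γ²` with `F(ab) + F(ba) = 0` for every pair `{a,b}`. -/
noncomputable def H2space (n : ℕ) : Submodule ℝ (Word n → ℝ) where
  carrier := {F | (∀ w, F w ≠ 0 → w.Nodup ∧ w.length = 2) ∧
    ∀ a b : Fin n, a ≠ b → F [a, b] + F [b, a] = 0}
  zero_mem' := by
    refine ⟨?_, fun a b _ => by simp⟩
    intro w hw; simp at hw
  add_mem' := by
    rintro F G ⟨hF1, hF2⟩ ⟨hG1, hG2⟩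
    refine ⟨?_, fun a b hab => ?_⟩
    · intro w hw
      by_contra h
      have h1 : F w = 0 := by by_contra h'; exact h (hF1 w h')
      have h2 : G w = 0 := by by_contra h'; exact h (hG1 w h')
      exact hw (by simp [h1, h2])
    · have hF := hF2 a b hab
      have hG := hG2 a b hab
      simp only [Pi.add_apply]
      linarith
  smul_mem' := by
    rintro c F ⟨hF1, hF2⟩
    refine ⟨?_, fun a b hab => ?_⟩
    · intro w hw
      by_contra h
      have h1 : F w = 0 := by by_contra h'; exact h (hF1 w h')
      exact hw (by simp [h1])
    · have hF := hF2 a b hab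
      simp only [Pi.smul_apply, smul_eq_mul]
      rw [← mul_add, hF, mul_zero]

/-- `H²₁ = span{e_a : a ∈ [n]}`. -/
noncomputable def H21 (n : ℕ) : Submodule ℝ (Word n → ℝ) :=
  Submodule.span ℝ (Set.range (evec (n := n)))

/-- `H²₂ = span{f_{(a,b)} : a ≠ b}`. -/
noncomputable def H22 (n : ℕ) : Submodule ℝ (Word n → ℝ) :=
  Submodule.span ℝ {F : Word n → ℝ | ∃ a b : Fin n, a ≠ b ∧ F = fvec a b}

/-!
A function in `H²` is determined by its values on the words `ij` with `i < j`, so the flows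
`x_{i≻j}` (`i < j`) form a basis of `H²`. Pairing with `e_a` computes the divergence of a flow at
`a`, and `f_{(a,b)}` is a sum of the 3-cycles `x_{a≻b} + x_{b≻c} + x_{c≻a}`, which are divergence
free; this gives `H²₁ ⊥ H²₂`. Adding the terms `c ∈ {a, b}` (which vanish) to the sum defining
`f_{(a,b)}` shows `f_{(a,b)} = n x_{a≻b} - e_a + e_b`, so every `x_{a≻b}` lies in `H²₁ + H²₂`.
Finally `H²₁` is the image of the gradient `s ↦ Σ_a s_a e_a`, whose kernel is the constants.
-/

section

variable {n : ℕ}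

lemma mem_allWords {w : Word n} : w ∈ allWords n ↔ w.Nodup := by
  simp only [allWords, rankings, Finset.mem_biUnion, Finset.mem_univ, true_and,
    List.mem_toFinset, List.mem_permutations]
  exact ⟨fun ⟨A, hA⟩ => hA.symm.nodup A.nodup_toList,
    fun h => ⟨w.toFinset, (List.toFinset_toList h).symm⟩⟩

lemma mem_gamma2 {w : Word n} : w ∈ gamma2 n ↔ w.Nodup ∧ w.length = 2 := by
  rw [gamma2, Finset.mem_filter, mem_allWords]

@[simp]
lemma xab_self (a : Fin n) : xab a a = 0 :=
  sub_self _

lemma xab_swap (a b : Fin n) : xab b a = -xab a b :=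
  (neg_sub _ _).symm

lemma xab_apply_of_lt {i j u v : Fin n} (hij : i < j) (huv : u < v) :
    xab i j [u, v] = if u = i ∧ v = j then 1 else 0 := by
  have : ¬(u = j ∧ v = i) := by rintro ⟨rfl, rfl⟩; exact lt_asymm hij huv
  simp [xab, dirac, this]

lemma xab_mem_H2space (a b : Fin n) : xab a b ∈ H2space n := by
  rcases eq_or_ne a b with rfl | hab
  · rw [xab_self]; exact zero_mem _
  refine ⟨fun w hw => ?_, fun u v _ => ?_⟩
  · by_cases h₁ : w = [a, b]
    · simp [h₁, hab]
    by_cases h₂ : w = [b, a]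
    · simp [h₂, hab.symm]
    simp [xab, dirac, h₁, h₂] at hw
  · simp only [xab, dirac, Pi.sub_apply, List.cons.injEq, and_true]
    split_ifs <;> simp_all

lemma evec_eq_sum (a : Fin n) : evec a = ∑ b, xab a b :=
  Finset.sum_erase _ (xab_self a)

lemma fvec_eq (a b : Fin n) : fvec a b = (n : ℝ) • xab a b - evec a + evec b := by
  have hcycle : ∀ c ∈ (Finset.univ : Finset (Fin n)), c ∉ Finset.univ \ {a, b} →
      xab a b + xab b c + xab c a = 0 := by
    intro c _ hc
    obtain rfl | rfl : c = a ∨ c = b := by simp at hc; tauto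
    · simp [xab_swap c b]
    · simp [xab_swap c a]
  rw [fvec, Finset.sum_subset (Finset.subset_univ _) hcycle, Finset.sum_add_distrib,
    Finset.sum_add_distrib, Finset.sum_const, Finset.card_univ, Fintype.card_fin,
    evec_eq_sum, evec_eq_sum]
  simp only [xab_swap _ a, Finset.sum_neg_distrib, ← Nat.cast_smul_eq_nsmul ℝ]
  abel

lemma evec_apply_pair (a u v : Fin n) :
    evec a [u, v] = (if u = a then 1 else 0) - (if v = a then 1 else 0) := by
  simp [evec_eq_sum, xab, dirac, Finset.sum_sub_distrib, ite_and, eq_comm]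

lemma evec_mem_H2space (a : Fin n) : evec a ∈ H2space n :=
  Submodule.sum_mem _ fun b _ => xab_mem_H2space a b

lemma fvec_mem_H2space (a b : Fin n) : fvec a b ∈ H2space n :=
  Submodule.sum_mem _ fun c _ =>
    add_mem (add_mem (xab_mem_H2space a b) (xab_mem_H2space b c)) (xab_mem_H2space c a)

lemma H21_le_H2space : H21 n ≤ H2space n :=
  Submodule.span_le.mpr <| Set.range_subset_iff.mpr evec_mem_H2space

lemma H22_le_H2space : H22 n ≤ H2space n :=
  Submodule.span_le.mpr fun _ ⟨a, b, _, hF⟩ => hF ▸ fvec_mem_H2space a b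

lemma eq_zero_of_mem_H2space {F : Word n → ℝ} (hF : F ∈ H2space n)
    (h : ∀ u v : Fin n, u < v → F [u, v] = 0) : F = 0 := by
  funext w
  by_contra hw
  rw [Pi.zero_apply] at hw
  obtain ⟨hnd, hlen⟩ := hF.1 w hw
  obtain ⟨u, v, rfl⟩ := List.length_eq_two.mp hlen
  have huv : u ≠ v := by simpa using hnd
  rcases huv.lt_or_gt with huv | hvu
  · exact hw (h u v huv)
  · exact hw (by linarith [hF.2 u v huv, h v u hvu])

lemma sum_lt_smul_xab_apply (c : Fin n → Fin n → ℝ) {u v : Fin n} (huv : u < v) :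
    (∑ i, ∑ j, if i < j then c i j • xab i j else 0) [u, v] = c u v := by
  have hterm : ∀ i j, (if i < j then c i j • xab i j else 0) [u, v] =
      if i = u ∧ j = v then c u v else 0 := by
    intro i j
    split_ifs with hij hij' hij'
    · obtain ⟨rfl, rfl⟩ := hij'; simp [xab_apply_of_lt hij huv]
    · have : ¬(u = i ∧ v = j) := fun ⟨hu, hv⟩ => hij' ⟨hu.symm, hv.symm⟩
      simp [xab_apply_of_lt hij huv, this]
    · exact absurd (hij'.1 ▸ hij'.2 ▸ huv) hij
    · rfl
  simp only [Finset.sum_apply, hterm, ite_and, Finset.sum_ite_irrel, Finset.sum_ite_eq',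
    Finset.mem_univ, if_true, Finset.sum_const_zero]

lemma sum_lt_smul_xab_mem_H2space (c : Fin n → Fin n → ℝ) :
    (∑ i, ∑ j, if i < j then c i j • xab i j else 0) ∈ H2space n :=
  Submodule.sum_mem _ fun i _ => Submodule.sum_mem _ fun j _ => by
    split_ifs
    · exact Submodule.smul_mem _ _ (xab_mem_H2space i j)
    · exact zero_mem _

lemma eq_sum_xab_of_mem_H2space {F : Word n → ℝ} (hF : F ∈ H2space n) :
    F = ∑ i, ∑ j, if i < j then F [i, j] • xab i j else 0 := by
  refine sub_eq_zero.mp (eq_zero_of_mem_H2space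
    (sub_mem hF (sum_lt_smul_xab_mem_H2space _)) fun u v huv => ?_)
  rw [Pi.sub_apply, sum_lt_smul_xab_apply _ huv, sub_self]

noncomputable def xabOrdered (p : {p : Fin n × Fin n // p.1 < p.2}) : Word n → ℝ :=
  xab p.1.1 p.1.2

lemma H2space_eq_span : H2space n = Submodule.span ℝ (Set.range (xabOrdered (n := n))) := by
  refine le_antisymm (fun F hF => ?_) (Submodule.span_le.mpr ?_)
  · rw [eq_sum_xab_of_mem_H2space hF]
    refine Submodule.sum_mem _ fun i _ => Submodule.sum_mem _ fun j _ => ?_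
    split_ifs with hij
    · exact Submodule.smul_mem _ _ (Submodule.subset_span ⟨⟨(i, j), hij⟩, rfl⟩)
    · exact zero_mem _
  · rintro _ ⟨p, rfl⟩
    exact xab_mem_H2space _ _

lemma linearIndependent_xabOrdered : LinearIndependent ℝ (xabOrdered (n := n)) := by
  let coord : (Word n → ℝ) →ₗ[ℝ] ({p : Fin n × Fin n // p.1 < p.2} → ℝ) :=
    LinearMap.pi fun p => LinearMap.proj [p.1.1, p.1.2]
  refine LinearIndependent.of_comp coord ?_
  convert Pi.linearIndependent_single_one {p : Fin n × Fin n // p.1 < p.2} ℝ using 1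
  funext p q
  simp only [Function.comp_apply, coord, LinearMap.pi_apply, LinearMap.proj_apply, xabOrdered,
    xab_apply_of_lt p.2 q.2, Pi.single_apply, Subtype.ext_iff, Prod.ext_iff]

instance : FiniteDimensional ℝ (H2space n) := by
  rw [H2space_eq_span]
  exact FiniteDimensional.span_of_finite ℝ (Set.finite_range _)

lemma finrank_H2space : Module.finrank ℝ (H2space n) = n.choose 2 := by
  rw [H2space_eq_span, finrank_span_eq_card linearIndependent_xabOrdered, Fintype.card_subtype,
    Fintype.card_product_filter_lt, Fintype.card_fin]

noncomputable def flowDivergence : (Word n → ℝ) →ₗ[ℝ] (Fin n → ℝ) where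
  toFun G a := ∑ b, (G [a, b] - G [b, a])
  map_add' F G := by
    funext a
    simp only [Pi.add_apply, ← Finset.sum_add_distrib]
    exact Finset.sum_congr rfl fun _ _ => by ring
  map_smul' r G := by
    funext a
    simp only [Pi.smul_apply, smul_eq_mul, RingHom.id_apply, Finset.mul_sum, mul_sub]

lemma flowDivergence_xab (c d : Fin n) :
    flowDivergence (xab c d) = (2 : ℝ) • (Pi.single c 1 - Pi.single d 1) := by
  funext a
  simp only [flowDivergence, LinearMap.coe_mk, AddHom.coe_mk, xab, dirac, Pi.sub_apply,
    List.cons.injEq, and_true, ite_and, Finset.sum_sub_distrib, Finset.sum_ite_irrel,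
    Finset.sum_ite_eq', Finset.mem_univ, if_true, Finset.sum_const_zero, Pi.smul_apply,
    Pi.single_apply, smul_eq_mul]
  ring

lemma flowDivergence_cycle (a b c : Fin n) :
    flowDivergence (xab a b + xab b c + xab c a) = 0 := by
  simp only [map_add, flowDivergence_xab]
  module

lemma H22_le_ker_flowDivergence : H22 n ≤ LinearMap.ker flowDivergence :=
  Submodule.span_le.mpr fun _ ⟨a, b, _, hF⟩ => by
    rw [hF, SetLike.mem_coe, LinearMap.mem_ker, fvec, map_sum]
    exact Finset.sum_eq_zero fun c _ => flowDivergence_cycle a b c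

lemma sum_gamma2_xab_mul {a b : Fin n} (hab : a ≠ b) (G : Word n → ℝ) :
    ∑ π ∈ gamma2 n, xab a b π * G π = G [a, b] - G [b, a] := by
  have hmem : ∀ {u v : Fin n}, u ≠ v → [u, v] ∈ gamma2 n := fun huv =>
    mem_gamma2.mpr ⟨by simpa using huv, rfl⟩
  simp only [xab, dirac, Pi.sub_apply, sub_mul, ite_mul, one_mul, zero_mul,
    Finset.sum_sub_distrib, Finset.sum_ite_eq', hmem hab, hmem hab.symm, if_true]

lemma sum_gamma2_evec_mul (a : Fin n) (G : Word n → ℝ) :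
    ∑ π ∈ gamma2 n, evec a π * G π = flowDivergence G a := by
  simp only [evec, Finset.sum_apply, Finset.sum_mul]
  rw [Finset.sum_comm, flowDivergence, LinearMap.coe_mk, AddHom.coe_mk,
    ← Finset.sum_erase (f := fun b => G [a, b] - G [b, a]) _ (sub_self (G [a, a]))]
  exact Finset.sum_congr rfl fun b hb => sum_gamma2_xab_mul (Finset.ne_of_mem_erase hb).symm G

lemma sum_gamma2_mul_eq_zero {F G : Word n → ℝ} (hF : F ∈ H21 n) (hG : G ∈ H22 n) :
    ∑ π ∈ gamma2 n, F π * G π = 0 := by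
  obtain ⟨s, rfl⟩ := (Submodule.mem_span_range_iff_exists_fun ℝ).mp hF
  have hdiv : flowDivergence G = 0 := H22_le_ker_flowDivergence hG
  simp only [Finset.sum_apply, Pi.smul_apply, smul_eq_mul, Finset.sum_mul, mul_assoc]
  rw [Finset.sum_comm]
  simp only [← Finset.mul_sum, sum_gamma2_evec_mul, hdiv, Pi.zero_apply, mul_zero,
    Finset.sum_const_zero]

lemma H21_inf_H22 : H21 n ⊓ H22 n = ⊥ := by
  refine eq_bot_iff.mpr fun F ⟨hF₁, hF₂⟩ => (Submodule.mem_bot ℝ).mpr ?_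
  have hvanish : ∀ π ∈ gamma2 n, F π = 0 := fun π hπ =>
    mul_self_eq_zero.mp <| (Finset.sum_eq_zero_iff_of_nonneg fun π _ => mul_self_nonneg (F π)).mp
      (sum_gamma2_mul_eq_zero hF₁ hF₂) π hπ
  funext w
  by_contra hw
  exact hw (hvanish w (mem_gamma2.mpr ((H21_le_H2space hF₁).1 w hw)))

lemma xab_mem_H21_sup_H22 {a b : Fin n} (hab : a ≠ b) : xab a b ∈ H21 n ⊔ H22 n := by
  have hn : (n : ℝ) ≠ 0 := Nat.cast_ne_zero.mpr a.pos.ne'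
  have hx : xab a b = (n : ℝ)⁻¹ • (fvec a b + evec a - evec b) := by
    rw [fvec_eq, show (n : ℝ) • xab a b - evec a + evec b + evec a - evec b = (n : ℝ) • xab a b by
      abel, inv_smul_smul₀ hn]
  rw [hx]
  refine Submodule.smul_mem _ _ (sub_mem (add_mem ?_ ?_) ?_)
  · exact Submodule.mem_sup_right (Submodule.subset_span ⟨a, b, hab, rfl⟩)
  · exact Submodule.mem_sup_left (Submodule.subset_span ⟨a, rfl⟩)
  · exact Submodule.mem_sup_left (Submodule.subset_span ⟨b, rfl⟩)

lemma H21_sup_H22 : H21 n ⊔ H22 n = H2space n := by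
  refine le_antisymm (sup_le H21_le_H2space H22_le_H2space) ?_
  rw [H2space_eq_span, Submodule.span_le]
  rintro _ ⟨p, rfl⟩
  exact xab_mem_H21_sup_H22 p.2.ne

noncomputable def gradFlow : (Fin n → ℝ) →ₗ[ℝ] (Word n → ℝ) :=
  Fintype.linearCombination ℝ evec

lemma range_gradFlow : LinearMap.range gradFlow = H21 n :=
  Fintype.range_linearCombination ℝ evec

lemma gradFlow_apply_pair (s : Fin n → ℝ) (u v : Fin n) : gradFlow s [u, v] = s u - s v := by
  simp [gradFlow, Fintype.linearCombination_apply, evec_apply_pair, mul_sub,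
    Finset.sum_sub_distrib]

lemma gradFlow_eq_sum (s : Fin n → ℝ) :
    gradFlow s = ∑ i, ∑ j, if i < j then (s i - s j) • xab i j else 0 := by
  have hmem : gradFlow s ∈ H2space n :=
    H21_le_H2space (range_gradFlow ▸ LinearMap.mem_range_self gradFlow s)
  simpa only [gradFlow_apply_pair] using eq_sum_xab_of_mem_H2space hmem

lemma coe_H21 : (H21 n : Set (Word n → ℝ)) =
    {F | ∃ s : Fin n → ℝ, F = ∑ i, ∑ j, if i < j then (s i - s j) • xab i j else 0} := by
  ext F
  simp only [← range_gradFlow, SetLike.mem_coe, LinearMap.mem_range, gradFlow_eq_sum,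
    Set.mem_ofPred_eq, eq_comm]

lemma ker_gradFlow [NeZero n] : LinearMap.ker gradFlow = ℝ ∙ (1 : Fin n → ℝ) := by
  ext s
  rw [LinearMap.mem_ker, Submodule.mem_span_singleton]
  constructor
  · intro hs
    refine ⟨s 0, funext fun u => ?_⟩
    have h := congrFun hs [0, u]
    rw [gradFlow_apply_pair, Pi.zero_apply, sub_eq_zero] at h
    simp [h]
  · rintro ⟨c, rfl⟩
    simp [gradFlow_eq_sum]

lemma finrank_H21 [NeZero n] : Module.finrank ℝ (H21 n) = n - 1 := by
  have h := LinearMap.finrank_range_add_finrank_ker (gradFlow (n := n))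
  rw [range_gradFlow, ker_gradFlow, finrank_span_singleton one_ne_zero,
    Module.finrank_fin_fun] at h
  omega

lemma finrank_H22 [NeZero n] : Module.finrank ℝ (H22 n) = (n - 1) * (n - 2) / 2 := by
  have : FiniteDimensional ℝ (H21 n) := Submodule.finiteDimensional_of_le H21_le_H2space
  have : FiniteDimensional ℝ (H22 n) := Submodule.finiteDimensional_of_le H22_le_H2space
  have h := Submodule.finrank_sup_add_finrank_inf_eq (H21 n) (H22 n)
  rw [H21_sup_H22, H21_inf_H22, finrank_bot, add_zero, finrank_H2space, finrank_H21] at h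
  obtain ⟨m, rfl⟩ : ∃ m, n = m + 1 := ⟨n - 1, (Nat.succ_pred_eq_of_ne_zero (NeZero.ne n)).symm⟩
  rw [Nat.choose_two_right, Nat.triangle_succ, Nat.add_sub_cancel] at h
  rw [Nat.add_sub_cancel, show m + 1 - 2 = m - 1 by omega]
  omega

end

/-- **Explicit orthogonal decomposition of pairwise rank information:**
`H²₁ ⊥ H²₂` (w.r.t. `⟨F,G⟩ = Σ_{π∈Γ²} F π · G π`), `H² = H²₁ ⊕ H²₂`,
`dim H²₁ = n−1`, `dim H²₂ = (n−1)(n−2)/2`, and `H²₁` is the space of gradient edge flows. -/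
theorem H2_decomposition {n : ℕ} (hn : 2 ≤ n) :
    (∀ F ∈ H21 n, ∀ G ∈ H22 n, ∑ π ∈ gamma2 n, F π * G π = 0) ∧
    H21 n ⊓ H22 n = ⊥ ∧
    H21 n ⊔ H22 n = H2space n ∧
    Module.finrank ℝ (H21 n) = n - 1 ∧
    Module.finrank ℝ (H22 n) = (n - 1) * (n - 2) / 2 ∧
    (H21 n : Set (Word n → ℝ)) =
      {F : Word n → ℝ | ∃ s : Fin n → ℝ,
        F = ∑ i : Fin n, ∑ j : Fin n, (if i < j then (s i - s j) • xab i j else 0)} := by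
  have : NeZero n := ⟨by omega⟩
  exact ⟨fun _ hF _ hG => sum_gamma2_mul_eq_zero hF hG, H21_inf_H22, H21_sup_H22, finrank_H21,
    finrank_H22, coe_H21⟩
end

section
/- Insertion identity for marginals (correctness of the low-pass filters): let A ⊆ [n] with |A| ≥ 2, F ∈ L(Γ(A)), let π = π₁…π_j be a duplicate-free word with content C := content(π) satisfying C ⊊ A and |C| ≥ 2, and let b ∈ A ∖ C. Then M_C F(π) = M_{C∪{b}}F(b π₁…π_j) + M_{C∪{b}}F(π₁ b π₂…π_j) + … + M_{C∪{b}}F(π₁…π_j b), the sum ranging over the j+1 words obtained by inserting b into π at each possible position. Moreover, for any distinct a, b ∈ A: Σ_{σ∈Γ(A)} F(σ) = M_{{a,b}}F(ab) + M_{{a,b}}F(ba). -/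
open Finset
open scoped List

/-!
A word `τ` with content `B` is a subword of a ranking `σ` exactly when `τ = σ|_B`, so
`M_B F(τ)` is the sum of `F σ` over the rankings `σ ∈ Γ(A)` with `σ|_B = τ`. Both identities then
hold summand by summand: `σ|_{C ∪ {b}}` is `σ|_C` with `b` inserted at exactly one position, and
`σ|_{a,b}` is exactly one of `ab`, `ba`.
-/

namespace List

variable {α : Type*}

theorem insertIdx_eq_append_cons_iff {l u v : List α} {b : α} {t : ℕ} (hb : b ∉ l)
    (ht : t ≤ l.length) : l.insertIdx t b = u ++ b :: v ↔ l = u ++ v ∧ t = u.length := by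
  obtain ⟨l₁, l₂, rfl, rfl, hins⟩ := exists_of_modifyTailIdx (cons b) ht
  have hb₁ : b ∉ l₁ := fun h => hb (mem_append_left _ h)
  have hb₂ : b ∉ l₂ := fun h => hb (mem_append_right _ h)
  rw [insertIdx, hins, append_cons_inj_of_notMem hb₁ hb₂]
  constructor
  · rintro ⟨rfl, -, rfl⟩
    exact ⟨rfl, rfl⟩
  · rintro ⟨huv, hlen⟩
    obtain ⟨rfl, rfl⟩ := append_inj huv hlen
    exact ⟨rfl, rfl, rfl⟩

theorem sum_ite_eq_insertIdx [DecidableEq α] {M : Type*} [AddCommMonoid M] {l ρ : List α}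
    {b : α} (hbl : b ∉ l) (hbρ : b ∈ ρ) (c : M) :
    ∑ t ∈ Finset.range (l.length + 1), (if ρ = l.insertIdx t b then c else 0) =
      if ρ.erase b = l then c else 0 := by
  obtain ⟨u, v, -, rfl, herase⟩ := exists_erase_eq hbρ
  have hterm : ∀ t ∈ Finset.range (l.length + 1),
      (if u ++ b :: v = l.insertIdx t b then c else 0) =
        if l = u ++ v then (if t = u.length then c else 0) else 0 := fun t ht => by
    simp only [@eq_comm _ (u ++ b :: v),
      insertIdx_eq_append_cons_iff hbl (Nat.lt_succ_iff.mp (Finset.mem_range.mp ht)), ite_and]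
  rw [Finset.sum_congr rfl hterm, herase]
  by_cases huv : l = u ++ v
  · subst huv
    simp
  · simp [huv, Ne.symm huv]

end List

section Marginals

variable {n : ℕ}

theorem mem_rankings {A : Finset (Fin n)} {σ : Word n} :
    σ ∈ rankings n A ↔ IsRanking A σ := by
  rw [rankings, List.mem_toFinset, List.mem_permutations]
  constructor
  · intro h
    refine ⟨h.nodup_iff.mpr A.nodup_toList, ?_⟩
    rw [List.toFinset_eq_of_perm _ _ h, Finset.toList_toFinset]
  · rintro ⟨hnd, hA⟩
    exact List.perm_of_nodup_nodup_toFinset_eq hnd A.nodup_toList (by rw [hA, toList_toFinset])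

theorem rankings_subset_allWords (A : Finset (Fin n)) : rankings n A ⊆ allWords n :=
  fun _ hσ => mem_biUnion.mpr ⟨A, mem_univ A, hσ⟩

theorem IsRanking.insertIdx {C : Finset (Fin n)} {π : Word n} (hπ : IsRanking C π) {b : Fin n}
    (hb : b ∉ C) {t : ℕ} (ht : t ≤ π.length) : IsRanking (insert b C) (π.insertIdx t b) := by
  have hperm := List.perm_insertIdx b π ht
  refine ⟨hperm.nodup_iff.mpr (List.nodup_cons.mpr ⟨?_, hπ.1⟩), ?_⟩
  · rwa [← List.mem_toFinset, hπ.2]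
  · rw [List.toFinset_eq_of_perm _ _ hperm, List.toFinset_cons, hπ.2]

@[simp]
theorem mem_restrictWord {σ : Word n} {B : Finset (Fin n)} {a : Fin n} :
    a ∈ restrictWord σ B ↔ a ∈ σ ∧ a ∈ B := by
  simp [restrictWord]

theorem sublist_iff_restrictWord_eq {σ τ : Word n} {B : Finset (Fin n)} (hσ : σ.Nodup)
    (hτ : IsRanking B τ) : τ <+ σ ↔ restrictWord σ B = τ := by
  constructor
  · intro h
    have hτB : τ.filter (fun a => decide (a ∈ B)) = τ :=
      List.filter_eq_self.mpr fun a ha => by simpa [← hτ.2] using ha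
    have hsub : τ <+ restrictWord σ B := hτB ▸ h.filter _
    refine (hsub.eq_of_length_le ?_).symm
    calc (restrictWord σ B).length = (restrictWord σ B).toFinset.card :=
          (List.toFinset_card_of_nodup (hσ.filter _)).symm
      _ ≤ B.card := card_le_card fun a ha => (mem_restrictWord.mp (List.mem_toFinset.mp ha)).2
      _ = τ.length := by rw [← hτ.2, List.toFinset_card_of_nodup hτ.1]
  · rintro rfl
    exact List.filter_sublist

theorem restrictWord_insert_erase {σ : Word n} (hσ : σ.Nodup) {C : Finset (Fin n)} {b : Fin n}
    (hb : b ∉ C) : (restrictWord σ (insert b C)).erase b = restrictWord σ C := by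
  unfold restrictWord
  rw [(hσ.filter _).erase_eq_filter, List.filter_filter]
  refine List.filter_congr fun a _ => ?_
  by_cases hab : a = b
  · subst hab
    simp [hb]
  · simp [hab]

theorem restrictWord_pair {σ : Word n} (hσ : σ.Nodup) {a b : Fin n} (ha : a ∈ σ) (hb : b ∈ σ)
    (hab : a ≠ b) : restrictWord σ {a, b} = [a, b] ∨ restrictWord σ {a, b} = [b, a] := by
  have hperm : restrictWord σ {a, b} ~ [a, b] :=
    List.perm_of_nodup_nodup_toFinset_eq (hσ.filter _) (by simp [hab]) (by
      ext x
      simp only [List.mem_toFinset, mem_restrictWord, mem_insert, mem_singleton, List.mem_cons,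
        List.not_mem_nil, or_false]
      constructor
      · exact And.right
      · rintro (rfl | rfl) <;> simp [*])
  -- `[a, b].permutations` evaluates to `[[a, b], [b, a]]`
  simpa [List.permutations, List.permutationsAux, List.permutationsAux.rec] using
    List.mem_permutations.mpr hperm

theorem marg_eq_sum_rankings {A B : Finset (Fin n)} {F : Word n → ℝ} (hF : MemL A F)
    {τ : Word n} (hτ : IsRanking B τ) :
    marg B F τ = ∑ σ ∈ rankings n A, if restrictWord σ B = τ then F σ else 0 := by
  have hF_out : ∀ σ ∈ allWords n, σ ∉ rankings n A → (if τ <+ σ then F σ else 0) = 0 :=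
    fun σ _ hσ => by
      rw [not_imp_comm.mp (hF σ) (mt mem_rankings.mpr hσ), ite_self]
  rw [marg, if_pos hτ, ← sum_subset (rankings_subset_allWords A) hF_out]
  refine sum_congr rfl fun σ hσ => ?_
  exact if_congr (sublist_iff_restrictWord_eq (mem_rankings.mp hσ).1 hτ) rfl rfl

theorem marg_eq_sum_marg_insertIdx {A : Finset (Fin n)} {F : Word n → ℝ} (hF : MemL A F)
    {π : Word n} (hπ : π.Nodup) {b : Fin n} (hbA : b ∈ A) (hbπ : b ∉ π) :
    marg π.toFinset F π =
      ∑ t ∈ range (π.length + 1), marg (insert b π.toFinset) F (π.insertIdx t b) := by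
  have hbC : b ∉ π.toFinset := by simpa using hbπ
  have hπC : IsRanking π.toFinset π := ⟨hπ, rfl⟩
  rw [marg_eq_sum_rankings hF hπC, sum_congr rfl fun t ht => marg_eq_sum_rankings hF
    (hπC.insertIdx hbC (Nat.lt_succ_iff.mp (mem_range.mp ht))), sum_comm]
  refine sum_congr rfl fun σ hσ => ?_
  obtain ⟨hσ, hσA⟩ := mem_rankings.mp hσ
  have hbσ : b ∈ σ := by rwa [← List.mem_toFinset, hσA]
  rw [List.sum_ite_eq_insertIdx hbπ (mem_restrictWord.mpr ⟨hbσ, mem_insert_self b _⟩),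
    restrictWord_insert_erase hσ hbC]

theorem sum_rankings_eq_marg_pair_add {A : Finset (Fin n)} {F : Word n → ℝ} (hF : MemL A F)
    {a b : Fin n} (ha : a ∈ A) (hb : b ∈ A) (hab : a ≠ b) :
    ∑ σ ∈ rankings n A, F σ = marg {a, b} F [a, b] + marg {a, b} F [b, a] := by
  rw [marg_eq_sum_rankings hF ⟨by simp [hab], by simp⟩,
    marg_eq_sum_rankings hF ⟨by simp [hab.symm], by simp [pair_comm]⟩, ← sum_add_distrib]
  refine sum_congr rfl fun σ hσ => ?_
  obtain ⟨hσ, hσA⟩ := mem_rankings.mp hσ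
  have hAσ : ∀ x ∈ A, x ∈ σ := fun x hx => by rwa [← List.mem_toFinset, hσA]
  rcases restrictWord_pair hσ (hAσ a ha) (hAσ b hb) hab with h | h <;> simp [h, hab, hab.symm]

end Marginals

theorem marg_insert_identity_general {n : ℕ}
    (A : Finset (Fin n))
    (F : Word n → ℝ) (hF : MemL A F)
    (π : Word n) (hπnd : π.Nodup)
    (b : Fin n) (hb : b ∈ A \ π.toFinset) :
    (marg π.toFinset F π =
      ∑ t ∈ Finset.range (π.length + 1),
        marg (insert b π.toFinset) F (π.insertIdx t b)) ∧
    (∀ a b' : Fin n, a ∈ A → b' ∈ A → a ≠ b' →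
      ∑ σ ∈ rankings n A, F σ = marg {a, b'} F [a, b'] + marg {a, b'} F [b', a]) := by
  obtain ⟨hbA, hbC⟩ := mem_sdiff.mp hb
  exact ⟨marg_eq_sum_marg_insertIdx hF hπnd hbA (List.mem_toFinset.not.mp hbC),
    fun _ _ ha hb' hab => sum_rankings_eq_marg_pair_add hF ha hb' hab⟩

/-- **Insertion identity for marginals (correctness of the low-pass filters):**
for `F ∈ L(Γ(A))`, a word `π` with content `C ⊊ A`, `|C| ≥ 2`, and `b ∈ A ∖ C`:
`M_C F(π) = Σ_{t=0}^{|π|} M_{C∪{b}} F (π with b inserted at position t)`;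
moreover for distinct `a, b' ∈ A`: `Σ_{σ∈Γ(A)} F σ = M_{{a,b'}}F(ab') + M_{{a,b'}}F(b'a)`. -/
theorem marg_insert_identity {n : ℕ} (hn : 2 ≤ n)
    (A : Finset (Fin n)) (hA : 2 ≤ A.card)
    (F : Word n → ℝ) (hF : MemL A F)
    (π : Word n) (hπnd : π.Nodup) (hπ2 : 2 ≤ π.toFinset.card)
    (hsub : π.toFinset ⊂ A) (b : Fin n) (hb : b ∈ A \ π.toFinset) :
    (marg π.toFinset F π =
      ∑ t ∈ Finset.range (π.length + 1),
        marg (insert b π.toFinset) F (π.insertIdx t b)) ∧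
    (∀ a b' : Fin n, a ∈ A → b' ∈ A → a ≠ b' →
      ∑ σ ∈ rankings n A, F σ = marg {a, b'} F [a, b'] + marg {a, b'} F [b', a]) :=
  marg_insert_identity_general A F hF π hπnd b hb
end
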